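/- Preservation for the second (necessary) type system: if ⊢₂ M : T and A ⊢ M → N, then there exists a type S compatible with T such that ⊢₂ N : S, and moreover if A dominates S then A dominates T (where a role dominates a non-computation type vacuously, and dominates a computation type B○U iff A ≥ B). -/
import Mathlib


namespace LRBAC

/-- Role domination: `dom A B` means `A = A ⊔ B`. -/
def dom {R : Type*} [BooleanAlgebra R] (A B : R) : Prop := A = A ⊔ B

/-- Role modifiers: amplification `up A` and restriction `dn A`. -/
inductive Mod (R : Type*) where
  | up (A : R)
  | dn (A : R)

/-- Applying a role modifier to a context role. -/
def Mod.app {R : Type*} [BooleanAlgebra R] : Mod R → R → R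
  | .up A, C => A ⊔ C
  | .dn A, C => A ⊓ C

/-- Terms of λ-RBAC (de Bruijn representation). -/
inductive Tm (R : Type*) where
  | base (n : ℕ)
  | var (n : ℕ)
  | abs (M : Tm R)
  | app (M N : Tm R)
  | fix (M : Tm R)
  | grd (A : R) (M : Tm R)
  | chk (M : Tm R)
  | unit (M : Tm R)
  | bind (M N : Tm R)
  | mod (m : Mod R) (M : Tm R)

/-- de Bruijn shifting. -/
def Tm.shift {R : Type*} (d : ℕ) : ℕ → Tm R → Tm R
  | _, .base n => .base n
  | c, .var n => .var (if n < c then n else n + d)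
  | c, .abs M => .abs (Tm.shift d (c+1) M)
  | c, .app M N => .app (Tm.shift d c M) (Tm.shift d c N)
  | c, .fix M => .fix (Tm.shift d c M)
  | c, .grd A M => .grd A (Tm.shift d c M)
  | c, .chk M => .chk (Tm.shift d c M)
  | c, .unit M => .unit (Tm.shift d c M)
  | c, .bind M N => .bind (Tm.shift d c M) (Tm.shift d (c+1) N)
  | c, .mod m M => .mod m (Tm.shift d c M)

/-- Capture-avoiding substitution: `Tm.subst k N M = M[k := N]`. -/
def Tm.subst {R : Type*} : ℕ → Tm R → Tm R → Tm R
  | _, _, .base n => .base n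
  | k, N, .var n => if n = k then N else if k < n then .var (n-1) else .var n
  | k, N, .abs M => .abs (Tm.subst (k+1) (Tm.shift 1 0 N) M)
  | k, N, .app M M' => .app (Tm.subst k N M) (Tm.subst k N M')
  | k, N, .fix M => .fix (Tm.subst k N M)
  | k, N, .grd A M => .grd A (Tm.subst k N M)
  | k, N, .chk M => .chk (Tm.subst k N M)
  | k, N, .unit M => .unit (Tm.subst k N M)
  | k, N, .bind M M' => .bind (Tm.subst k N M) (Tm.subst (k+1) (Tm.shift 1 0 N) M')
  | k, N, .mod m M => .mod m (Tm.subst k N M)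

/-- Values. -/
inductive Tm.IsValue {R : Type*} : Tm R → Prop
  | base (n : ℕ) : Tm.IsValue (.base n)
  | var (n : ℕ) : Tm.IsValue (.var n)
  | abs (M : Tm R) : Tm.IsValue (.abs M)
  | grd (A : R) (M : Tm R) : Tm.IsValue (.grd A M)
  | unit (M : Tm R) : Tm.IsValue (.unit M)

variable {R : Type*} [BooleanAlgebra R]

/-- Role-indexed small-step evaluation `A ⊢ M → M'`. -/
inductive Eval : R → Tm R → Tm R → Prop
  | rApp {A : R} {M N : Tm R} : Eval A (.app (.abs M) N) (Tm.subst 0 N M)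
  | cApp {A : R} {M M' N : Tm R} : Eval A M M' → Eval A (.app M N) (.app M' N)
  | rFix {A : R} {M : Tm R} :
      Eval A (.fix (.abs M)) (Tm.subst 0 (.fix (.abs M)) M)
  | cFix {A : R} {M M' : Tm R} : Eval A M M' → Eval A (.fix M) (.fix M')
  | rChk {A B : R} {M : Tm R} : dom A B → Eval A (.chk (.grd B M)) (.unit M)
  | cChk {A : R} {M M' : Tm R} : Eval A M M' → Eval A (.chk M) (.chk M')
  | rBind {A : R} {M N : Tm R} : Eval A (.bind (.unit M) N) (Tm.subst 0 M N)
  | cBind {A : R} {M M' N : Tm R} : Eval A M M' → Eval A (.bind M N) (.bind M' N)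
  | rMod {A : R} {m : Mod R} {V : Tm R} : V.IsValue → Eval A (.mod m V) V
  | cMod {A : R} {m : Mod R} {M M' : Tm R} :
      Eval (m.app A) M M' → Eval A (.mod m M) (.mod m M')

/-- Role errors `M ⇑ᴬ err`. -/
inductive Err : R → Tm R → Prop
  | chk {A B : R} {M : Tm R} : ¬ dom A B → Err A (.chk (.grd B M))
  | ctxApp {A : R} {M N : Tm R} : Err A M → Err A (.app M N)
  | ctxFix {A : R} {M : Tm R} : Err A M → Err A (.fix M)
  | ctxBind {A : R} {M N : Tm R} : Err A M → Err A (.bind M N)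
  | ctxChk {A : R} {M : Tm R} : Err A M → Err A (.chk M)
  | ctxMod {A : R} {m : Mod R} {M : Tm R} : Err (m.app A) M → Err A (.mod m M)

/-- Multi-step evaluation. -/
def Evals (A : R) : Tm R → Tm R → Prop := Relation.ReflTransGen (Eval A)

/-- Divergence under context role `A`. -/
def Diverges (A : R) (M : Tm R) : Prop :=
  ∃ f : ℕ → Tm R, f 0 = M ∧ ∀ n, Eval A (f n) (f (n+1))

/-- Types: base, arrow, guard `A⊳T`, computation `A○T`. -/
inductive Ty (R : Type*) where
  | base
  | arrow (S T : Ty R)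
  | grd (A : R) (T : Ty R)
  | comp (A : R) (T : Ty R)

/-- Subtyping, indexed by the system: `true` is the first ("sufficient")
system, `false` the second ("necessary") one. -/
inductive Sub : Bool → Ty R → Ty R → Prop
  | base {s} : Sub s .base .base
  | arrow {s} {S S' T T' : Ty R} :
      Sub s S' S → Sub s T T' → Sub s (.arrow S T) (.arrow S' T')
  | grd {s} {A A' : R} {T T' : Ty R} :
      (s = true → dom A' A) → (s = false → dom A A') → Sub s T T' →
      Sub s (.grd A T) (.grd A' T')
  | comp {s} {A A' : R} {T T' : Ty R} :
      (s = true → dom A' A) → (s = false → dom A A') → Sub s T T' →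
      Sub s (.comp A T) (.comp A' T')

/-- Typing judgment of the two λ-RBAC type systems. -/
inductive Typing : Bool → List (Ty R) → Tm R → Ty R → Prop
  | base {s Γ n} : Typing s Γ (.base n) .base
  | var {s Γ n T} : Γ[n]? = some T → Typing s Γ (.var n) T
  | sub {s Γ M T T'} : Typing s Γ M T → Sub s T T' → Typing s Γ M T'
  | abs {s Γ M S T} : Typing s (S :: Γ) M T → Typing s Γ (.abs M) (.arrow S T)
  | app {s Γ M N S T} :
      Typing s Γ M (.arrow S T) → Typing s Γ N S → Typing s Γ (.app M N) T
  | fix {s Γ M T} : Typing s Γ M (.arrow T T) → Typing s Γ (.fix M) T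
  | grd {s Γ M A T} : Typing s Γ M T → Typing s Γ (.grd A M) (.grd A T)
  | chk {s Γ M A T} : Typing s Γ M (.grd A T) → Typing s Γ (.chk M) (.comp A T)
  | unit {s Γ M T} : Typing s Γ M T → Typing s Γ (.unit M) (.comp ⊥ T)
  | bind {s Γ M N A B T S} :
      Typing s Γ M (.comp A T) → Typing s (T :: Γ) N (.comp B S) →
      Typing s Γ (.bind M N) (.comp (A ⊔ B) S)
  | modUp {s Γ M A B T} :
      Typing s Γ M (.comp B T) →
      Typing s Γ (.mod (.up A) M) (.comp (B ⊓ Aᶜ) T)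
  | modDn {s Γ M A B T} :
      Typing s Γ M (.comp B T) → (s = true → dom A B) →
      Typing s Γ (.mod (.dn A) M) (.comp B T)

/-- Type compatibility. -/
def Compat (T S : Ty R) : Prop :=
  T = S ∨ ∃ (A B : R) (U : Ty R), T = .comp A U ∧ S = .comp B U

/-- A role dominates a type. -/
def DomTy (A : R) : Ty R → Prop
  | .comp B _ => dom A B
  | _ => True

end LRBAC

namespace LRBAC
set_option linter.unusedSectionVars false

variable {R : Type*} [BooleanAlgebra R]

theorem dom_iff {A B : R} : dom A B ↔ B ≤ A := by
  constructor
  · intro h; rw [h]; exact le_sup_right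
  · intro h; rw [dom, sup_eq_left.mpr h]

theorem dom_refl (A : R) : dom A A := dom_iff.mpr le_rfl

theorem sub_refl {s : Bool} : ∀ T : Ty R, Sub s T T
  | .base => Sub.base
  | .arrow S T => Sub.arrow (sub_refl S) (sub_refl T)
  | .grd A T => Sub.grd (fun _ => dom_refl A) (fun _ => dom_refl A) (sub_refl T)
  | .comp A T => Sub.comp (fun _ => dom_refl A) (fun _ => dom_refl A) (sub_refl T)

theorem sub_trans {s : Bool} {T₂ : Ty R} : ∀ {T₁ T₃ : Ty R},
    Sub s T₁ T₂ → Sub s T₂ T₃ → Sub s T₁ T₃ := by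
  induction T₂ with
  | base =>
    intro T₁ T₃ h1 h2; cases h1; exact h2
  | arrow S' T' ihS ihT =>
    intro T₁ T₃ h1 h2
    cases h1 with
    | arrow hS hT =>
      cases h2 with
      | arrow hS' hT' => exact Sub.arrow (ihS hS' hS) (ihT hT hT')
  | grd A' T' ih =>
    intro T₁ T₃ h1 h2
    cases h1 with
    | grd hd1 hd2 hT =>
      cases h2 with
      | grd hd1' hd2' hT' =>
        exact Sub.grd
          (fun hs => dom_iff.mpr (le_trans (dom_iff.mp (hd1 hs)) (dom_iff.mp (hd1' hs))))
          (fun hs => dom_iff.mpr (le_trans (dom_iff.mp (hd2' hs)) (dom_iff.mp (hd2 hs))))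
          (ih hT hT')
  | comp A' T' ih =>
    intro T₁ T₃ h1 h2
    cases h1 with
    | comp hd1 hd2 hT =>
      cases h2 with
      | comp hd1' hd2' hT' =>
        exact Sub.comp
          (fun hs => dom_iff.mpr (le_trans (dom_iff.mp (hd1 hs)) (dom_iff.mp (hd1' hs))))
          (fun hs => dom_iff.mpr (le_trans (dom_iff.mp (hd2' hs)) (dom_iff.mp (hd2 hs))))
          (ih hT hT')

/-! ### Shifting lemmas -/

theorem shift_zero : ∀ (c : ℕ) (M : Tm R), Tm.shift 0 c M = M
  | _, .base n => rfl
  | c, .var n => by simp [Tm.shift]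
  | c, .abs M => by simp [Tm.shift, shift_zero]
  | c, .app M N => by simp [Tm.shift, shift_zero]
  | c, .fix M => by simp [Tm.shift, shift_zero]
  | c, .grd A M => by simp [Tm.shift, shift_zero]
  | c, .chk M => by simp [Tm.shift, shift_zero]
  | c, .unit M => by simp [Tm.shift, shift_zero]
  | c, .bind M N => by simp [Tm.shift, shift_zero]
  | c, .mod m M => by simp [Tm.shift, shift_zero]

theorem shift_shift (k : ℕ) : ∀ (c : ℕ) (M : Tm R),
    Tm.shift 1 c (Tm.shift k c M) = Tm.shift (k+1) c M
  | _, .base n => rfl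
  | c, .var n => by
    by_cases h : n < c
    · simp [Tm.shift, h]
    · have h2 : ¬ n + k < c := by omega
      simp only [Tm.shift, if_neg h, if_neg h2]
      congr 1
  | c, .abs M => by simp [Tm.shift, shift_shift]
  | c, .app M N => by simp [Tm.shift, shift_shift]
  | c, .fix M => by simp [Tm.shift, shift_shift]
  | c, .grd A M => by simp [Tm.shift, shift_shift]
  | c, .chk M => by simp [Tm.shift, shift_shift]
  | c, .unit M => by simp [Tm.shift, shift_shift]
  | c, .bind M N => by simp [Tm.shift, shift_shift]
  | c, .mod m M => by simp [Tm.shift, shift_shift]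

/-! ### Weakening -/

theorem weaken_aux {s : Bool} {Γ : List (Ty R)} {M : Tm R} {T : Ty R}
    (h : Typing s Γ M T) :
    ∀ Γ₁ Γ₂ (U : Ty R), Γ = Γ₁ ++ Γ₂ →
      Typing s (Γ₁ ++ U :: Γ₂) (Tm.shift 1 Γ₁.length M) T := by
  induction h with
  | base => intro Γ₁ Γ₂ U hΓ; exact Typing.base
  | @var _ n T' hget =>
    intro Γ₁ Γ₂ U hΓ
    subst hΓ
    simp only [Tm.shift]
    by_cases hn : n < Γ₁.length
    · rw [if_pos hn]
      refine Typing.var ?_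
      rw [List.getElem?_append_left hn] at hget ⊢
      exact hget
    · rw [if_neg hn]
      push_neg at hn
      refine Typing.var ?_
      rw [List.getElem?_append_right hn] at hget
      rw [List.getElem?_append_right (by omega : Γ₁.length ≤ n + 1)]
      have : n + 1 - Γ₁.length = (n - Γ₁.length) + 1 := by omega
      rw [this]
      simpa using hget
  | sub hM hsub ih =>
    intro Γ₁ Γ₂ U hΓ; exact Typing.sub (ih Γ₁ Γ₂ U hΓ) hsub
  | @abs _ _ S T' hM ih =>
    intro Γ₁ Γ₂ U hΓ
    refine Typing.abs ?_
    have := ih (S :: Γ₁) Γ₂ U (by simp [hΓ])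
    simpa using this
  | app hM hN ihM ihN =>
    intro Γ₁ Γ₂ U hΓ; exact Typing.app (ihM Γ₁ Γ₂ U hΓ) (ihN Γ₁ Γ₂ U hΓ)
  | fix hM ih => intro Γ₁ Γ₂ U hΓ; exact Typing.fix (ih Γ₁ Γ₂ U hΓ)
  | grd hM ih => intro Γ₁ Γ₂ U hΓ; exact Typing.grd (ih Γ₁ Γ₂ U hΓ)
  | chk hM ih => intro Γ₁ Γ₂ U hΓ; exact Typing.chk (ih Γ₁ Γ₂ U hΓ)
  | unit hM ih => intro Γ₁ Γ₂ U hΓ; exact Typing.unit (ih Γ₁ Γ₂ U hΓ)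
  | @bind _ M' N' A' B' T' S' hM hN ihM ihN =>
    intro Γ₁ Γ₂ U hΓ
    refine Typing.bind (ihM Γ₁ Γ₂ U hΓ) ?_
    have := ihN (T' :: Γ₁) Γ₂ U (by simp [hΓ])
    simpa using this
  | modUp hM ih => intro Γ₁ Γ₂ U hΓ; exact Typing.modUp (ih Γ₁ Γ₂ U hΓ)
  | modDn hM hs ih => intro Γ₁ Γ₂ U hΓ; exact Typing.modDn (ih Γ₁ Γ₂ U hΓ) hs

theorem weaken0 {s : Bool} {Γ : List (Ty R)} {M : Tm R} {T U : Ty R}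
    (h : Typing s Γ M T) : Typing s (U :: Γ) (Tm.shift 1 0 M) T :=
  weaken_aux h [] Γ U rfl

theorem weakenN {s : Bool} {Γ : List (Ty R)} {M : Tm R} {T : Ty R}
    (h : Typing s Γ M T) : ∀ Δ : List (Ty R),
      Typing s (Δ ++ Γ) (Tm.shift Δ.length 0 M) T
  | [] => by simpa [shift_zero] using h
  | U :: Δ => by
    have := weaken0 (U := U) (weakenN h Δ)
    rw [shift_shift] at this
    simpa using this

/-! ### Substitution -/

theorem subst_aux {s : Bool} {Γ' : List (Ty R)} {M : Tm R} {T : Ty R}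
    (hM : Typing s Γ' M T) :
    ∀ (Δ Γ : List (Ty R)) (N : Tm R) (S : Ty R), Γ' = Δ ++ S :: Γ →
      Typing s Γ N S →
      Typing s (Δ ++ Γ) (Tm.subst Δ.length (Tm.shift Δ.length 0 N) M) T := by
  induction hM with
  | base => intro Δ Γ N S hΓ hN; exact Typing.base
  | @var _ n T' hget =>
    intro Δ Γ N S hΓ hN
    subst hΓ
    simp only [Tm.subst]
    rcases lt_trichotomy n Δ.length with hn | hn | hn
    · rw [if_neg (by omega), if_neg (by omega)]
      refine Typing.var ?_
      rw [List.getElem?_append_left hn] at hget ⊢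
      exact hget
    · subst hn
      rw [if_pos rfl]
      rw [List.getElem?_append_right le_rfl] at hget
      simp at hget
      subst hget
      exact weakenN hN Δ
    · rw [if_neg (by omega), if_pos (by omega)]
      refine Typing.var ?_
      rw [List.getElem?_append_right (by omega : Δ.length ≤ n)] at hget
      rw [List.getElem?_append_right (by omega : Δ.length ≤ n - 1)]
      have h1 : n - Δ.length = (n - Δ.length - 1) + 1 := by omega
      rw [h1] at hget
      simp only [List.getElem?_cons_succ] at hget
      have h2 : n - 1 - Δ.length = n - Δ.length - 1 := by omega
      rw [h2]
      exact hget
  | sub hM hsub ih =>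
    intro Δ Γ N S hΓ hN; exact Typing.sub (ih Δ Γ N S hΓ hN) hsub
  | @abs _ _ S0 T0 hM ih =>
    intro Δ Γ N S hΓ hN
    refine Typing.abs ?_
    have := ih (S0 :: Δ) Γ N S (by simp [hΓ]) hN
    rw [List.length_cons] at this
    rw [← shift_shift Δ.length 0 N] at this
    simpa using this
  | app hM hN' ihM ihN =>
    intro Δ Γ N S hΓ hN
    exact Typing.app (ihM Δ Γ N S hΓ hN) (ihN Δ Γ N S hΓ hN)
  | fix hM ih => intro Δ Γ N S hΓ hN; exact Typing.fix (ih Δ Γ N S hΓ hN)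
  | grd hM ih => intro Δ Γ N S hΓ hN; exact Typing.grd (ih Δ Γ N S hΓ hN)
  | chk hM ih => intro Δ Γ N S hΓ hN; exact Typing.chk (ih Δ Γ N S hΓ hN)
  | unit hM ih => intro Δ Γ N S hΓ hN; exact Typing.unit (ih Δ Γ N S hΓ hN)
  | @bind _ M' N' A' B' T' S' hM hN' ihM ihN =>
    intro Δ Γ N S hΓ hN
    refine Typing.bind (ihM Δ Γ N S hΓ hN) ?_
    have := ihN (T' :: Δ) Γ N S (by simp [hΓ]) hN
    rw [List.length_cons] at this
    rw [← shift_shift Δ.length 0 N] at this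
    simpa using this
  | modUp hM ih => intro Δ Γ N S hΓ hN; exact Typing.modUp (ih Δ Γ N S hΓ hN)
  | modDn hM hs ih => intro Δ Γ N S hΓ hN; exact Typing.modDn (ih Δ Γ N S hΓ hN) hs

theorem subst0 {s : Bool} {Γ : List (Ty R)} {M N : Tm R} {S T : Ty R}
    (hM : Typing s (S :: Γ) M T) (hN : Typing s Γ N S) :
    Typing s Γ (Tm.subst 0 N M) T := by
  have := subst_aux hM [] Γ N S rfl hN
  simpa [shift_zero] using this


/-! ### Inversion lemmas -/

theorem inv_abs {s : Bool} {Γ : List (Ty R)} {M : Tm R} {T : Ty R}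
    (h : Typing s Γ (.abs M) T) :
    ∃ S' T', Typing s (S' :: Γ) M T' ∧ Sub s (.arrow S' T') T := by
  generalize hE : Tm.abs M = M0 at h
  induction h with
  | abs hM _ => cases hE; exact ⟨_, _, hM, sub_refl _⟩
  | sub hM hsub ih =>
    obtain ⟨S', T', h1, h2⟩ := ih hE
    exact ⟨S', T', h1, sub_trans h2 hsub⟩
  | _ => cases hE

theorem inv_app {s : Bool} {Γ : List (Ty R)} {M N : Tm R} {T : Ty R}
    (h : Typing s Γ (.app M N) T) :
    ∃ S0 T0, Typing s Γ M (.arrow S0 T0) ∧ Typing s Γ N S0 ∧ Sub s T0 T := by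
  generalize hE : Tm.app M N = M0 at h
  induction h with
  | app hM hN _ _ =>
    cases hE; exact ⟨_, _, hM, hN, sub_refl _⟩
  | sub hM hsub ih =>
    obtain ⟨S0, T0, h1, h2, h3⟩ := ih hE
    exact ⟨S0, T0, h1, h2, sub_trans h3 hsub⟩
  | _ => cases hE

theorem inv_fix {s : Bool} {Γ : List (Ty R)} {M : Tm R} {T : Ty R}
    (h : Typing s Γ (.fix M) T) :
    ∃ T0, Typing s Γ M (.arrow T0 T0) ∧ Sub s T0 T := by
  generalize hE : Tm.fix M = M0 at h
  induction h with
  | fix hM _ => cases hE; exact ⟨_, hM, sub_refl _⟩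
  | sub hM hsub ih =>
    obtain ⟨T0, h1, h2⟩ := ih hE
    exact ⟨T0, h1, sub_trans h2 hsub⟩
  | _ => cases hE

theorem inv_grd {s : Bool} {Γ : List (Ty R)} {A0 : R} {M : Tm R} {T : Ty R}
    (h : Typing s Γ (.grd A0 M) T) :
    ∃ U, Typing s Γ M U ∧ Sub s (.grd A0 U) T := by
  generalize hE : Tm.grd A0 M = M0 at h
  induction h with
  | grd hM _ => cases hE; exact ⟨_, hM, sub_refl _⟩
  | sub hM hsub ih =>
    obtain ⟨U, h1, h2⟩ := ih hE
    exact ⟨U, h1, sub_trans h2 hsub⟩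
  | _ => cases hE

theorem inv_chk {s : Bool} {Γ : List (Ty R)} {M : Tm R} {T : Ty R}
    (h : Typing s Γ (.chk M) T) :
    ∃ A0 T0, Typing s Γ M (.grd A0 T0) ∧ Sub s (.comp A0 T0) T := by
  generalize hE : Tm.chk M = M0 at h
  induction h with
  | chk hM _ => cases hE; exact ⟨_, _, hM, sub_refl _⟩
  | sub hM hsub ih =>
    obtain ⟨A0, T0, h1, h2⟩ := ih hE
    exact ⟨A0, T0, h1, sub_trans h2 hsub⟩
  | _ => cases hE

theorem inv_unit {s : Bool} {Γ : List (Ty R)} {M : Tm R} {T : Ty R}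
    (h : Typing s Γ (.unit M) T) :
    ∃ U, Typing s Γ M U ∧ Sub s (.comp ⊥ U) T := by
  generalize hE : Tm.unit M = M0 at h
  induction h with
  | unit hM _ => cases hE; exact ⟨_, hM, sub_refl _⟩
  | sub hM hsub ih =>
    obtain ⟨U, h1, h2⟩ := ih hE
    exact ⟨U, h1, sub_trans h2 hsub⟩
  | _ => cases hE

theorem inv_bind {s : Bool} {Γ : List (Ty R)} {M N : Tm R} {T : Ty R}
    (h : Typing s Γ (.bind M N) T) :
    ∃ A1 B1 T1 S1, Typing s Γ M (.comp A1 T1) ∧ Typing s (T1 :: Γ) N (.comp B1 S1) ∧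
      Sub s (.comp (A1 ⊔ B1) S1) T := by
  generalize hE : Tm.bind M N = M0 at h
  induction h with
  | bind hM hN _ _ => cases hE; exact ⟨_, _, _, _, hM, hN, sub_refl _⟩
  | sub hM hsub ih =>
    obtain ⟨A1, B1, T1, S1, h1, h2, h3⟩ := ih hE
    exact ⟨A1, B1, T1, S1, h1, h2, sub_trans h3 hsub⟩
  | _ => cases hE

theorem inv_mod_up {s : Bool} {Γ : List (Ty R)} {A0 : R} {M : Tm R} {T : Ty R}
    (h : Typing s Γ (.mod (.up A0) M) T) :
    ∃ B0 U, Typing s Γ M (.comp B0 U) ∧ Sub s (.comp (B0 ⊓ A0ᶜ) U) T := by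
  generalize hE : Tm.mod (Mod.up A0) M = M0 at h
  induction h with
  | modUp hM _ => cases hE; exact ⟨_, _, hM, sub_refl _⟩
  | modDn hM _ _ => cases hE
  | sub hM hsub ih =>
    obtain ⟨B0, U, h1, h2⟩ := ih hE
    exact ⟨B0, U, h1, sub_trans h2 hsub⟩
  | _ => cases hE

theorem inv_mod_dn {s : Bool} {Γ : List (Ty R)} {A0 : R} {M : Tm R} {T : Ty R}
    (h : Typing s Γ (.mod (.dn A0) M) T) :
    ∃ B0 U, Typing s Γ M (.comp B0 U) ∧ (s = true → dom A0 B0) ∧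
      Sub s (.comp B0 U) T := by
  generalize hE : Tm.mod (Mod.dn A0) M = M0 at h
  induction h with
  | modDn hM hs _ => cases hE; exact ⟨_, _, hM, hs, sub_refl _⟩
  | modUp hM _ => cases hE
  | sub hM hsub ih =>
    obtain ⟨B0, U, h1, h2, h3⟩ := ih hE
    exact ⟨B0, U, h1, h2, sub_trans h3 hsub⟩
  | _ => cases hE

/-! ### Preservation, strengthened -/

theorem preservation {A : R} {M N : Tm R} (hE : Eval A M N) :
    ∀ {Γ : List (Ty R)} {T : Ty R}, Typing false Γ M T →
    ∃ S : Ty R, Typing false Γ N S ∧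
      (S = T ∨ ∃ B C U, S = .comp B U ∧ T = .comp C U ∧ dom (B ⊔ A) C) := by
  induction hE with
  | @rApp A M N =>
    intro Γ T hT
    obtain ⟨S0, T0, hAbs, hN, hsub⟩ := inv_app hT
    obtain ⟨S1, T1, hBody, hArr⟩ := inv_abs hAbs
    cases hArr with
    | arrow hS hT' =>
      have hN' : Typing false Γ N S1 := Typing.sub hN hS
      exact ⟨T, Typing.sub (Typing.sub (subst0 hBody hN') hT') hsub, Or.inl rfl⟩
  | @cApp A M M' N _ ih =>
    intro Γ T hT
    obtain ⟨S0, T0, hM, hN, hsub⟩ := inv_app hT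
    obtain ⟨S', hM', hcase⟩ := ih hM
    have hSeq : S' = Ty.arrow S0 T0 := by
      rcases hcase with h | ⟨B, C, U, h1, h2, _⟩
      · exact h
      · cases h2
    subst hSeq
    exact ⟨T, Typing.sub (Typing.app hM' hN) hsub, Or.inl rfl⟩
  | @rFix A M =>
    intro Γ T hT
    obtain ⟨T0, hAbs, hsub⟩ := inv_fix hT
    obtain ⟨S1, T1, hBody, hArr⟩ := inv_abs hAbs
    cases hArr with
    | arrow hS hT' =>
      have hFix : Typing false Γ (.fix (.abs M)) S1 :=
        Typing.sub (Typing.fix hAbs) hS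
      exact ⟨T, Typing.sub (Typing.sub (subst0 hBody hFix) hT') hsub, Or.inl rfl⟩
  | @cFix A M M' _ ih =>
    intro Γ T hT
    obtain ⟨T0, hM, hsub⟩ := inv_fix hT
    obtain ⟨S', hM', hcase⟩ := ih hM
    have hSeq : S' = Ty.arrow T0 T0 := by
      rcases hcase with h | ⟨B, C, U, h1, h2, _⟩
      · exact h
      · cases h2
    subst hSeq
    exact ⟨T, Typing.sub (Typing.fix hM') hsub, Or.inl rfl⟩
  | @rChk A B M hAB =>
    intro Γ T hT
    obtain ⟨A0, T0, hGrd, hsub⟩ := inv_chk hT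
    cases hsub with
    | comp hd1 hd2 hT' =>
      rename_i A0' T2
      obtain ⟨U, hM, hsubG⟩ := inv_grd hGrd
      cases hsubG with
      | grd hg1 hg2 hU =>
        refine ⟨.comp ⊥ T2, Typing.unit (Typing.sub (Typing.sub hM hU) hT'), Or.inr ⟨⊥, A0', T2, rfl, rfl, ?_⟩⟩
        rw [dom_iff]
        have h1 : A0' ≤ A0 := dom_iff.mp (hd2 rfl)
        have h2 : A0 ≤ B := dom_iff.mp (hg2 rfl)
        have h3 : B ≤ A := dom_iff.mp hAB
        calc A0' ≤ A := le_trans h1 (le_trans h2 h3)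
          _ ≤ ⊥ ⊔ A := le_sup_right
  | @cChk A M M' _ ih =>
    intro Γ T hT
    obtain ⟨A0, T0, hM, hsub⟩ := inv_chk hT
    obtain ⟨S', hM', hcase⟩ := ih hM
    have hSeq : S' = Ty.grd A0 T0 := by
      rcases hcase with h | ⟨B, C, U, h1, h2, _⟩
      · exact h
      · cases h2
    subst hSeq
    exact ⟨T, Typing.sub (Typing.chk hM') hsub, Or.inl rfl⟩
  | @rBind A M N =>
    intro Γ T hT
    obtain ⟨A1, B1, T1, S1, hUnit, hN, hsub⟩ := inv_bind hT
    cases hsub with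
    | comp hd1 hd2 hS =>
      rename_i C S2
      obtain ⟨U, hM, hsubU⟩ := inv_unit hUnit
      cases hsubU with
      | comp hu1 hu2 hU =>
        have hA1 : A1 = ⊥ := le_bot_iff.mp (dom_iff.mp (hu2 rfl))
        have hM' : Typing false Γ M T1 := Typing.sub hM hU
        refine ⟨.comp B1 S2,
          Typing.sub (subst0 hN hM') (Sub.comp (fun h => nomatch h) (fun _ => dom_refl B1) hS),
          Or.inr ⟨B1, C, S2, rfl, rfl, ?_⟩⟩
        rw [dom_iff]
        have h1 : C ≤ A1 ⊔ B1 := dom_iff.mp (hd2 rfl)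
        rw [hA1, bot_sup_eq] at h1
        exact le_trans h1 le_sup_left
  | @cBind A M M' N _ ih =>
    intro Γ T hT
    obtain ⟨A1, B1, T1, S1, hM, hN, hsub⟩ := inv_bind hT
    cases hsub with
    | comp hd1 hd2 hS =>
      rename_i C S2
      obtain ⟨S', hM', hcase⟩ := ih hM
      obtain ⟨A2, hSeq, hA2⟩ : ∃ A2, S' = Ty.comp A2 T1 ∧ A1 ≤ A2 ⊔ A := by
        rcases hcase with h | ⟨B, C', U, h1, h2, h3⟩
        · exact ⟨A1, h, le_sup_left⟩
        · cases h2; exact ⟨B, h1, dom_iff.mp h3⟩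
      subst hSeq
      refine ⟨.comp (A2 ⊔ B1) S2,
        Typing.sub (Typing.bind hM' hN)
          (Sub.comp (fun h => nomatch h) (fun _ => dom_refl _) hS),
        Or.inr ⟨A2 ⊔ B1, C, S2, rfl, rfl, ?_⟩⟩
      rw [dom_iff]
      have h1 : C ≤ A1 ⊔ B1 := dom_iff.mp (hd2 rfl)
      calc C ≤ A1 ⊔ B1 := h1
        _ ≤ (A2 ⊔ A) ⊔ B1 := sup_le_sup_right hA2 _
        _ ≤ (A2 ⊔ B1) ⊔ A := by
            rw [sup_assoc, sup_assoc]
            exact sup_le_sup_left (by rw [sup_comm]) _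
  | @rMod A m V hV =>
    intro Γ T hT
    cases m with
    | up A0 =>
      obtain ⟨B0, U, hVt, hsub⟩ := inv_mod_up hT
      cases hsub with
      | comp hd1 hd2 hU =>
        rename_i C T2
        refine ⟨.comp B0 T2,
          Typing.sub hVt (Sub.comp (fun h => nomatch h) (fun _ => dom_refl _) hU),
          Or.inr ⟨B0, C, T2, rfl, rfl, ?_⟩⟩
        rw [dom_iff]
        have h1 : C ≤ B0 ⊓ A0ᶜ := dom_iff.mp (hd2 rfl)
        exact le_trans h1 (le_trans inf_le_left le_sup_left)
    | dn A0 =>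
      obtain ⟨B0, U, hVt, _, hsub⟩ := inv_mod_dn hT
      cases hsub with
      | comp hd1 hd2 hU =>
        rename_i C T2
        refine ⟨.comp B0 T2,
          Typing.sub hVt (Sub.comp (fun h => nomatch h) (fun _ => dom_refl _) hU),
          Or.inr ⟨B0, C, T2, rfl, rfl, ?_⟩⟩
        rw [dom_iff]
        have h1 : C ≤ B0 := dom_iff.mp (hd2 rfl)
        exact le_trans h1 le_sup_left
  | @cMod A m M M' _ ih =>
    intro Γ T hT
    cases m with
    | up A0 =>
      obtain ⟨B0, U, hM, hsub⟩ := inv_mod_up hT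
      cases hsub with
      | comp hd1 hd2 hU =>
        rename_i C T2
        obtain ⟨S', hM', hcase⟩ := ih hM
        obtain ⟨B2, hSeq, hB2⟩ : ∃ B2, S' = Ty.comp B2 U ∧ B0 ≤ B2 ⊔ (A0 ⊔ A) := by
          rcases hcase with h | ⟨B, C', U', h1, h2, h3⟩
          · exact ⟨B0, h, le_sup_left⟩
          · cases h2; exact ⟨B, h1, by simpa [Mod.app] using dom_iff.mp h3⟩
        subst hSeq
        refine ⟨.comp (B2 ⊓ A0ᶜ) T2,
          Typing.sub (Typing.modUp hM')
            (Sub.comp (fun h => nomatch h) (fun _ => dom_refl _) hU),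
          Or.inr ⟨B2 ⊓ A0ᶜ, C, T2, rfl, rfl, ?_⟩⟩
        rw [dom_iff]
        have h1 : C ≤ B0 ⊓ A0ᶜ := dom_iff.mp (hd2 rfl)
        calc C ≤ B0 ⊓ A0ᶜ := h1
          _ ≤ (B2 ⊔ (A0 ⊔ A)) ⊓ A0ᶜ := inf_le_inf_right _ hB2
          _ = (B2 ⊓ A0ᶜ) ⊔ ((A0 ⊔ A) ⊓ A0ᶜ) := inf_sup_right _ _ _
          _ ≤ (B2 ⊓ A0ᶜ) ⊔ A := by
              refine sup_le_sup_left ?_ _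
              rw [inf_sup_right]
              simp
    | dn A0 =>
      obtain ⟨B0, U, hM, _, hsub⟩ := inv_mod_dn hT
      cases hsub with
      | comp hd1 hd2 hU =>
        rename_i C T2
        obtain ⟨S', hM', hcase⟩ := ih hM
        obtain ⟨B2, hSeq, hB2⟩ : ∃ B2, S' = Ty.comp B2 U ∧ B0 ≤ B2 ⊔ (A0 ⊓ A) := by
          rcases hcase with h | ⟨B, C', U', h1, h2, h3⟩
          · exact ⟨B0, h, le_sup_left⟩
          · cases h2; exact ⟨B, h1, by simpa [Mod.app] using dom_iff.mp h3⟩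
        subst hSeq
        refine ⟨.comp B2 T2,
          Typing.sub (Typing.modDn hM' (fun h => nomatch h))
            (Sub.comp (fun h => nomatch h) (fun _ => dom_refl _) hU),
          Or.inr ⟨B2, C, T2, rfl, rfl, ?_⟩⟩
        rw [dom_iff]
        have h1 : C ≤ B0 := dom_iff.mp (hd2 rfl)
        calc C ≤ B0 := h1
          _ ≤ B2 ⊔ (A0 ⊓ A) := hB2
          _ ≤ B2 ⊔ A := sup_le_sup_left inf_le_right _

end LRBAC

open LRBAC

/-- Preservation for the second (necessary) type system. -/
theorem stmt_15 (R : Type*) [BooleanAlgebra R] (A : R) (M N : Tm R) (T : Ty R)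
    (hT : Typing false [] M T) (hE : Eval A M N) :
    ∃ S : Ty R, Compat S T ∧ Typing false [] N S ∧ (DomTy A S → DomTy A T) := by
  obtain ⟨S, hS, hcase⟩ := preservation hE hT
  rcases hcase with rfl | ⟨B, C, U, rfl, rfl, hd⟩
  · exact ⟨_, Or.inl rfl, hS, fun h => h⟩
  · refine ⟨.comp B U, Or.inr ⟨B, C, U, rfl, rfl⟩, hS, ?_⟩
    intro h
    have h' : dom A B := h
    show dom A C
    rw [dom_iff] at h' ⊢
    calc C ≤ B ⊔ A := dom_iff.mp hd
      _ ≤ A := sup_le h' le_rfl
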